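/- arXiv:2110.06244 — 2 statements merged into one kernel-verified Lean document; each statement's English description precedes it below -/
import Mathlib

section
/- The sequence (T_n mod 5)_{n≥0} contains no factor of exponent greater than 3: there is no i ≥ 0 and p ≥ 1 with T_{i+t} ≡ T_{i+t+p} (mod 5) for all 0 ≤ t ≤ 2p. -/
/-!
Over `ZMod ℓ`, `T n` is the coefficient of `X ^ n` in `(1 + X + X ^ 2) ^ n`, and Frobenius gives
`(1 + X + X ^ 2) ^ (ℓ * q + r) = (1 + X ^ ℓ + X ^ (2 * ℓ)) ^ q * (1 + X + X ^ 2) ^ r`, whence the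
Lucas property `T (ℓ * q + r) ≡ T q * T r` for `r < ℓ`. Modulo 5 the digit values
`T 0, …, T 4 ≡ 1, 1, 3, 2, 4` are nonzero, so no `T n` vanishes mod 5, and for `n % 5 < 4` the ratio
`T (n + 1) / T n` depends only on `n % 5`, taking the distinct values `1, 3, 4, 2`. A period `p`
prime to 5 would make two of these ratios at different residues agree; a period `5 * p` descends,
by the Lucas property, to a period `p` of `T (n / 5)`, and infinite descent concludes.
-/

def trinomial (n : ℕ) : ℕ :=
  ∑ k ∈ Finset.range (n + 1), n.choose (2 * k) * (2 * k).choose k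

open Finset
open Polynomial hiding trinomial

theorem sum_range_two_mul_ite_dvd {M : Type*} [AddCommMonoid M] (g : ℕ → M) (n : ℕ) :
    ∑ m ∈ range (2 * n), (if 2 ∣ m then g (m / 2) else 0) = ∑ k ∈ range n, g k := by
  induction n with
  | zero => simp
  | succ n ih =>
    rw [Nat.mul_succ, sum_range_succ, sum_range_succ, sum_range_succ, ih,
      if_pos (dvd_mul_right 2 n), if_neg (by omega), Nat.mul_div_cancel_left n two_pos, add_zero]

theorem coeff_one_add_X_sq_pow {R : Type*} [CommSemiring R] (k m : ℕ) :
    ((1 + X ^ 2 : R[X]) ^ k).coeff m = if 2 ∣ m then (k.choose (m / 2) : R) else 0 := by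
  rw [show (1 + X ^ 2 : R[X]) = expand R 2 (1 + X) by simp, ← map_pow, coeff_expand two_pos]
  split_ifs <;> simp [coeff_one_add_X_pow]

theorem coeff_one_add_X_add_X_sq_pow_self {R : Type*} [CommSemiring R] (n : ℕ) :
    ((1 + X + X ^ 2 : R[X]) ^ n).coeff n = trinomial n := by
  set g : ℕ → R := fun j ↦ n.choose (2 * j) * (2 * j).choose j
  have hterm : ∀ k ≤ n, ((1 + X ^ 2 : R[X]) ^ k * X ^ (n - k) * (n.choose k : R[X])).coeff n =
      if 2 ∣ k then g (k / 2) else 0 := by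
    intro k hk
    rw [coeff_mul_natCast, coeff_mul_X_pow', if_pos (Nat.sub_le n k), Nat.sub_sub_self hk,
      coeff_one_add_X_sq_pow]
    split_ifs with h2
    · simp only [g, Nat.mul_div_cancel' h2, mul_comm]
    · rw [zero_mul]
  have hvanish : ∀ k ∈ range (2 * (n + 1)), k ∉ range (n + 1) →
      (if 2 ∣ k then g (k / 2) else 0) = 0 := by
    intro k _ hk
    split_ifs with h2
    · simp only [g, Nat.mul_div_cancel' h2]
      rw [Nat.choose_eq_zero_of_lt (by simpa using hk), Nat.cast_zero, zero_mul]
    · rfl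
  rw [show (1 + X + X ^ 2 : R[X]) = (1 + X ^ 2) + X by ring, add_pow, finsetSum_coeff,
    sum_congr rfl fun k hk ↦ hterm k (mem_range_succ_iff.1 hk),
    sum_subset (range_subset_range.2 (by omega)) hvanish, sum_range_two_mul_ite_dvd]
  simp [g, trinomial]

theorem coeff_expand_mul_of_natDegree_lt {R : Type*} [CommSemiring R] {p : ℕ} (hp : 0 < p)
    (F G : R[X]) (q : ℕ) {r : ℕ} (hr : r < p) (hG : G.natDegree < r + p) :
    (expand R p F * G).coeff (p * q + r) = F.coeff q * G.coeff r := by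
  rw [coeff_mul, sum_eq_single (p * q, r), coeff_expand hp, if_pos (dvd_mul_right p q),
    Nat.mul_div_cancel_left q hp]
  · rintro ⟨a, b⟩ hab hne
    rw [HasAntidiagonal.mem_antidiagonal] at hab
    dsimp only at hab hne ⊢
    rw [coeff_expand hp]
    split_ifs with hpa
    · obtain ⟨m, rfl⟩ := hpa
      have hmq : m < q := by
        by_contra! hqm
        obtain rfl | hlt := hqm.eq_or_lt
        · exact hne (Prod.ext rfl (by omega))
        · nlinarith
      rw [G.coeff_eq_zero_of_natDegree_lt (by nlinarith), mul_zero]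
    · rw [zero_mul]
  · simp

theorem cast_trinomial_mul_add {ℓ : ℕ} [Fact ℓ.Prime] (q : ℕ) {r : ℕ} (hr : r < ℓ) :
    (trinomial (ℓ * q + r) : ZMod ℓ) = trinomial q * trinomial r := by
  set P : (ZMod ℓ)[X] := 1 + X + X ^ 2
  have hdeg : (P ^ r).natDegree < r + ℓ := calc
    (P ^ r).natDegree ≤ r * 2 := natDegree_pow_le_of_le r (by simp only [P]; compute_degree)
    _ < r + ℓ := by omega
  rw [← coeff_one_add_X_add_X_sq_pow_self, pow_add, pow_mul', ← ZMod.expand_card,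
    coeff_expand_mul_of_natDegree_lt (Fact.out : ℓ.Prime).pos _ _ q hr hdeg,
    coeff_one_add_X_add_X_sq_pow_self, coeff_one_add_X_add_X_sq_pow_self]

/-- The factor `u i, …, u (i + 3 * p)` has period `p`, i.e. exponent `> 3`. -/
def HasOvercubeAt {α : Type*} (u : ℕ → α) (i p : ℕ) : Prop :=
  ∀ t ≤ 2 * p, u (i + t) = u (i + t + p)

theorem HasOvercubeAt.cast_trinomial_div {ℓ : ℕ} [Fact ℓ.Prime] {i p : ℕ}
    (hi : (trinomial (i % ℓ) : ZMod ℓ) ≠ 0)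
    (h : HasOvercubeAt (fun n ↦ (trinomial n : ZMod ℓ)) i (ℓ * p)) :
    HasOvercubeAt (fun n ↦ (trinomial n : ZMod ℓ)) (i / ℓ) p := by
  intro t ht
  have hℓ : i % ℓ < ℓ := Nat.mod_lt i (Fact.out : ℓ.Prime).pos
  have := h (ℓ * t) (by rw [mul_left_comm]; exact Nat.mul_le_mul_left ℓ ht)
  have hi' := Nat.div_add_mod i ℓ
  dsimp only at this ⊢
  rw [show i + ℓ * t = ℓ * (i / ℓ + t) + i % ℓ by rw [mul_add]; omega,
    show ℓ * (i / ℓ + t) + i % ℓ + ℓ * p = ℓ * (i / ℓ + t + p) + i % ℓ by ring,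
    cast_trinomial_mul_add _ hℓ, cast_trinomial_mul_add _ hℓ] at this
  exact mul_right_cancel₀ hi this

instance fact_prime_five : Fact (Nat.Prime 5) := ⟨Nat.prime_five⟩

theorem cast_trinomial_ne_zero_zmod_five (n : ℕ) : (trinomial n : ZMod 5) ≠ 0 := by
  induction n using Nat.strong_induction_on with
  | _ n ih =>
    obtain rfl | hn := Nat.eq_zero_or_pos n
    · decide
    rw [← Nat.div_add_mod n 5, cast_trinomial_mul_add _ (Nat.mod_lt n (by norm_num))]
    have hdigit : ∀ r < 5, (trinomial r : ZMod 5) ≠ 0 := by decide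
    exact mul_ne_zero (ih _ (by omega)) (hdigit _ (Nat.mod_lt n (by norm_num)))

theorem mod_five_eq_of_cast_trinomial_eq {n m : ℕ} (hn : n % 5 < 4) (hm : m % 5 < 4)
    (h₀ : (trinomial n : ZMod 5) = trinomial m)
    (h₁ : (trinomial (n + 1) : ZMod 5) = trinomial (m + 1)) : n % 5 = m % 5 := by
  -- the ratios `T (r + 1) / T r`, `r < 4`, are `1, 3, 4, 2` in `ZMod 5`
  have hratio : ∀ r < 4, ∀ s < 4,
      (trinomial (r + 1) * trinomial s : ZMod 5) = trinomial r * trinomial (s + 1) → r = s := by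
    decide
  have hsplit : ∀ k, k % 5 < 4 → (trinomial k : ZMod 5) = trinomial (k / 5) * trinomial (k % 5) ∧
      (trinomial (k + 1) : ZMod 5) = trinomial (k / 5) * trinomial (k % 5 + 1) := fun k hk ↦
    ⟨by rw [← cast_trinomial_mul_add _ (by omega), Nat.div_add_mod],
     by rw [← cast_trinomial_mul_add _ (by omega), ← add_assoc, Nat.div_add_mod]⟩
  obtain ⟨hn₀, hn₁⟩ := hsplit n hn
  obtain ⟨hm₀, hm₁⟩ := hsplit m hm
  apply hratio _ hn _ hm
  have hq : (trinomial (n / 5) * trinomial (m / 5) : ZMod 5) ≠ 0 :=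
    mul_ne_zero (cast_trinomial_ne_zero_zmod_five _) (cast_trinomial_ne_zero_zmod_five _)
  apply mul_left_cancel₀ hq
  calc _ = (trinomial (n + 1) * trinomial m : ZMod 5) := by rw [hn₁, hm₀]; ring
    _ = trinomial n * trinomial (m + 1) := by rw [h₀, h₁, mul_comm]
    _ = _ := by rw [hn₀, hm₁]; ring

theorem not_hasOvercubeAt_cast_trinomial_of_not_dvd {i p : ℕ} (hp : ¬ 5 ∣ p) :
    ¬ HasOvercubeAt (fun n ↦ (trinomial n : ZMod 5)) i p := by
  intro h
  have shift : ∀ n, i ≤ n → n ≤ i + 2 * p → (trinomial n : ZMod 5) = trinomial (n + p) := by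
    intro n hin hni
    simpa [Nat.add_sub_cancel' hin] using h (n - i) (by omega)
  obtain rfl | hp2 : p = 1 ∨ 2 ≤ p := by omega
  · have h₀ := shift i le_rfl (by omega)
    have h₁ := shift (i + 1) (by omega) (by omega)
    have h₂ := shift (i + 2) (by omega) (by omega)
    rcases (by omega : i % 5 < 3 ∨ i % 5 = 3 ∨ i % 5 = 4) with hi | hi | hi
    · have := mod_five_eq_of_cast_trinomial_eq (by omega) (by omega) h₀ h₁; omega
    · have := mod_five_eq_of_cast_trinomial_eq (n := i) (m := i + 2) (by omega) (by omega)
        (h₀.trans h₁) (h₁.trans h₂); omega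
    · have := mod_five_eq_of_cast_trinomial_eq (by omega) (by omega) h₁ h₂; omega
  · obtain ⟨n, hin, hni, hn, hnp⟩ : ∃ n, i ≤ n ∧ n ≤ i + 2 ∧ n % 5 < 4 ∧ (n + p) % 5 < 4 := by
      by_contra! H
      have := H i; have := H (i + 1); have := H (i + 2)
      omega
    have := mod_five_eq_of_cast_trinomial_eq hn hnp (shift n hin (by omega))
      (by rw [shift (n + 1) (by omega) (by omega), add_right_comm])
    omega

theorem not_hasOvercubeAt_cast_trinomial_zmod_five (i : ℕ) {p : ℕ} (hp : 1 ≤ p) :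
    ¬ HasOvercubeAt (fun n ↦ (trinomial n : ZMod 5)) i p := by
  induction p using Nat.strong_induction_on generalizing i with
  | _ p ih =>
    intro h
    by_cases h5 : 5 ∣ p
    · obtain ⟨p', rfl⟩ := h5
      exact ih p' (by omega) (i / 5) (by omega)
        (h.cast_trinomial_div (cast_trinomial_ne_zero_zmod_five _))
    · exact not_hasOvercubeAt_cast_trinomial_of_not_dvd h5 h

theorem trinomial_mod_five_no_exponent_gt_three :
    ¬ ∃ (i p : ℕ), 1 ≤ p ∧
      ∀ t ≤ 2 * p, trinomial (i + t) % 5 = trinomial (i + t + p) % 5 := by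
  rintro ⟨i, p, hp, h⟩
  exact not_hasOvercubeAt_cast_trinomial_zmod_five i hp fun t ht ↦
    (ZMod.natCast_eq_natCast_iff' _ _ 5).2 (h t ht)
end

section
/- Let p be a prime with base-p digit decomposition of n as n_0, …, n_r. Then p divides T_n if and only if p divides T_{n_i} for some digit n_i of the base-p representation of n. -/
open Polynomial hiding trinomial

theorem coeff_expand_mul {R : Type*} [CommSemiring R] {p a b : ℕ} (g h : R[X]) (hb : b < p)
    (hh : h.natDegree < b + p) :
    (expand R p g * h).coeff (a * p + b) = g.coeff a * h.coeff b := by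
  induction g using Polynomial.induction_on' with
  | add g₁ g₂ h₁ h₂ => simp only [map_add, add_mul, coeff_add, h₁, h₂]
  | monomial k c =>
    rw [expand_monomial, ← C_mul_X_pow_eq_monomial, mul_assoc, coeff_C_mul, coeff_X_pow_mul',
      coeff_monomial]
    rcases lt_trichotomy k a with hka | rfl | hak
    · have hkp : k * p + p ≤ a * p := by nlinarith
      rw [if_pos (by omega), if_neg hka.ne, coeff_eq_zero_of_natDegree_lt (by omega), mul_zero,
        zero_mul]
    · simp
    · have hkp : a * p + p ≤ k * p := by nlinarith
      rw [if_neg (by omega), if_neg hak.ne', mul_zero, zero_mul]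

theorem coeff_pow_mul_add_of_natDegree_le_two {p : ℕ} [Fact p.Prime] {f : (ZMod p)[X]}
    (hf : f.natDegree ≤ 2) {a b : ℕ} (hb : b < p) :
    (f ^ (a * p + b)).coeff (a * p + b) = (f ^ a).coeff a * (f ^ b).coeff b := by
  rw [pow_add, pow_mul, ← ZMod.expand_card]
  exact coeff_expand_mul _ _ hb ((natDegree_pow_le_of_le b hf).trans_lt (by omega))

theorem trinomial_eq_coeff (n : ℕ) : trinomial n = ((1 + X + X ^ 2 : ℕ[X]) ^ n).coeff n := by
  rw [show (1 + X + X ^ 2 : ℕ[X]) = X ^ 2 + (1 + X) by ring, add_pow, finsetSum_coeff, trinomial]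
  refine Finset.sum_congr rfl fun k _ => ?_
  rw [← C_eq_natCast, coeff_mul_C, ← pow_mul, coeff_X_pow_mul', coeff_one_add_X_pow]
  split_ifs with hk
  · rw [Nat.choose_mul (by omega), show 2 * k - k = k by omega,
      Nat.choose_symm_of_eq_add (show n - k = k + (n - 2 * k) by omega)]
    exact mul_comm _ _
  · rw [Nat.choose_eq_zero_of_lt (by omega), zero_mul, zero_mul]

theorem natCast_trinomial (R : Type*) [CommSemiring R] (n : ℕ) :
    (trinomial n : R) = ((1 + X + X ^ 2 : R[X]) ^ n).coeff n := by
  rw [trinomial_eq_coeff, ← Nat.coe_castRingHom, ← coeff_map]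
  simp

theorem natCast_trinomial_mul_add {p : ℕ} [Fact p.Prime] (a : ℕ) {b : ℕ} (hb : b < p) :
    (trinomial (a * p + b) : ZMod p) = trinomial a * trinomial b := by
  simp only [natCast_trinomial]
  exact coeff_pow_mul_add_of_natDegree_le_two (by compute_degree) hb

theorem natCast_trinomial_eq_prod_digits (p : ℕ) [Fact p.Prime] (n : ℕ) :
    (trinomial n : ZMod p) = ((Nat.digits p n).map fun d => (trinomial d : ZMod p)).prod := by
  have hp : p.Prime := Fact.out
  induction n using Nat.strong_induction_on with
  | _ n ih =>
    rcases n.eq_zero_or_pos with rfl | hn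
    · simp [trinomial]
    · rw [Nat.digits_def' hp.one_lt hn, List.map_cons, List.prod_cons,
        ← ih _ (Nat.div_lt_self hn hp.one_lt), mul_comm,
        ← natCast_trinomial_mul_add _ (Nat.mod_lt n hp.pos), Nat.div_add_mod']

theorem trinomial_dvd_iff_digit (p n : ℕ) (hp : p.Prime) :
    p ∣ trinomial n ↔ ∃ d ∈ Nat.digits p n, p ∣ trinomial d := by
  have := Fact.mk hp
  rw [← ZMod.natCast_eq_zero_iff, natCast_trinomial_eq_prod_digits, List.prod_eq_zero_iff,
    List.mem_map]
  simp only [ZMod.natCast_eq_zero_iff]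
end
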